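/- arXiv:2303.11576 — 2 statements merged into one kernel-verified Lean document; each statement's English description precedes it below -/
import Mathlib

section
/- Suppose Assumptions 4.8 and 4.9 hold: there is y* ∈ Y with β(y*) := max_{i∈I} ∫₀^∞ e^{−λ̲ t} ρ(S_i(t,y*),y*) dt < ∞, and there are constants L > 0 and α < λ̲ with ρ(S_i(t,u),S_i(t,v)) ≤ L e^{α t} ρ(u,v) for all u,v ∈ Y, i ∈ I, t ≥ 0. Suppose moreover there are constants ã, b̃ ≥ 0 with ∫_Y ρ(u,y*) J(y,du) ≤ ã ρ(y,y*) + b̃ for all y ∈ Y. Then for every (y,i) ∈ X, ∫_X ρ(u,y*) P((y,i), d(u,j)) ≤ a ρ(y,y*) + b, where a := λ̄ ã L / (λ̲ − α) and b := λ̄ (ã β(y*) + b̃ / λ̲). In particular, if λ̄ ã L + α < λ̲, then a < 1, i.e. P satisfies a Lyapunov (drift) condition with V(y,i) := ρ(y,y*). -/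
open MeasureTheory ProbabilityTheory Real Set Filter Topology

noncomputable section

/-- The operator `f ↦ (x ↦ ∫ f dκ(x))` iterated `n` times. -/
def kernelOpIter {Z : Type*} [MeasurableSpace Z] (κ : Kernel Z Z) :
    ℕ → (Z → ℝ) → Z → ℝ
  | 0, f => f
  | n + 1, f => fun z => ∫ w, kernelOpIter κ n f w ∂(κ z)

/-- The `n`-fold iterate of a kernel (`n = 0` giving the identity kernel). -/
def kIter {Z : Type*} [MeasurableSpace Z] (κ : Kernel Z Z) : ℕ → Kernel Z Z
  | 0 => Kernel.id
  | n + 1 => κ ∘ₖ kIter κ n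

/-- `Λ(y,i,t) = ∫₀ᵗ λ(S_i(h,y)) dh`. -/
def cumInt {Y I : Type*} (S : I → ℝ → Y → Y) (lam : Y → ℝ) (y : Y) (i : I) (t : ℝ) : ℝ :=
  ∫ h in (0:ℝ)..t, lam (S i h y)

/-- `G((y,i),A) = ∫₀^∞ λ(S_i(t,y)) e^{−Λ(y,i,t)} 1_A(S_i(t,y),i) dt`. -/
def Gker {Y I : Type*} (S : I → ℝ → Y → Y) (lam : Y → ℝ)
    (x : Y × I) (A : Set (Y × I)) : ℝ :=
  ∫ t in Ioi (0:ℝ), lam (S x.2 t x.1) * exp (-(cumInt S lam x.1 x.2 t)) *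
    A.indicator (fun _ => (1:ℝ)) (S x.2 t x.1, x.2)

/-- `G̃((y,i),A) = ∫₀^∞ e^{−Λ(y,i,t)} 1_A(S_i(t,y),i) dt`. -/
def Gtil {Y I : Type*} (S : I → ℝ → Y → Y) (lam : Y → ℝ)
    (x : Y × I) (A : Set (Y × I)) : ℝ :=
  ∫ t in Ioi (0:ℝ), exp (-(cumInt S lam x.1 x.2 t)) *
    A.indicator (fun _ => (1:ℝ)) (S x.2 t x.1, x.2)

/-- `W((y,i),A) = ∫_Y Σ_j π_{ij}(u) 1_A(u,j) J(y,du)`. -/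
def Wker {Y I : Type*} [MeasurableSpace Y] [Fintype I]
    (pm : I → I → Y → ℝ) (J : Kernel Y Y) (x : Y × I) (A : Set (Y × I)) : ℝ :=
  ∫ u, ∑ j, pm x.2 j u * A.indicator (fun _ => (1:ℝ)) (u, j) ∂(J x.1)

/-- `W̃((y,i),A) = λ(y)·W((y,i),A)`. -/
def Wtil {Y I : Type*} [MeasurableSpace Y] [Fintype I] (lam : Y → ℝ)
    (pm : I → I → Y → ℝ) (J : Kernel Y Y) (x : Y × I) (A : Set (Y × I)) : ℝ :=
  lam x.1 * Wker pm J x A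

/-- `P((y,i),A) = ∫₀^∞ λ(S_i(t,y)) e^{−Λ(y,i,t)} W((S_i(t,y),i),A) dt`. -/
def Pker {Y I : Type*} [MeasurableSpace Y] [Fintype I] (S : I → ℝ → Y → Y) (lam : Y → ℝ)
    (pm : I → I → Y → ℝ) (J : Kernel Y Y) (x : Y × I) (A : Set (Y × I)) : ℝ :=
  ∫ t in Ioi (0:ℝ), lam (S x.2 t x.1) * exp (-(cumInt S lam x.1 x.2 t)) *
    Wker pm J (S x.2 t x.1, x.2) A

/-- `P_T f(x) = Σ_{n=0}^∞ P̄ⁿ(g_T · (P̄ h_T))((x,0))`. -/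
def PTf {Y I : Type*} [MeasurableSpace Y] [MeasurableSpace I] (S : I → ℝ → Y → Y)
    (Pbar : Kernel (Y × I × ℝ) (Y × I × ℝ)) (f : Y × I → ℝ) (T : ℝ) (x : Y × I) : ℝ :=
  ∑' n : ℕ, kernelOpIter Pbar n
    (fun z => (Icc (0:ℝ) T).indicator (fun _ => (1:ℝ)) z.2.2 *
        f (S z.2.1 (T - z.2.2) z.1, z.2.1) *
        ∫ w, (Ioi T).indicator (fun _ => (1:ℝ)) w.2.2 ∂(Pbar z))
    (x.1, x.2, 0)

/-- `ψ_f((y,i),t,T)`. -/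
def psiF {Y I : Type*} [MeasurableSpace Y] [Fintype I] (S : I → ℝ → Y → Y) (lam : Y → ℝ)
    (pm : I → I → Y → ℝ) (J : Kernel Y Y) (f : Y × I → ℝ) (x : Y × I) (t T : ℝ) : ℝ :=
  lam (S x.2 t x.1) * exp (-(cumInt S lam x.1 x.2 t)) *
    ∫ u, ∑ j, pm x.2 j u * exp (-(cumInt S lam u j (T - t))) * f (S j (T - t) u, j)
      ∂(J (S x.2 t x.1))

/-- The operator `G` acting on functions. -/
def Gop {Y I : Type*} (S : I → ℝ → Y → Y) (lam : Y → ℝ) (f : Y × I → ℝ) (x : Y × I) : ℝ :=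
  ∫ t in Ioi (0:ℝ), lam (S x.2 t x.1) * exp (-(cumInt S lam x.1 x.2 t)) * f (S x.2 t x.1, x.2)

/-- The operator `W` acting on functions. -/
def Wop {Y I : Type*} [MeasurableSpace Y] [Fintype I]
    (pm : I → I → Y → ℝ) (J : Kernel Y Y) (f : Y × I → ℝ) (x : Y × I) : ℝ :=
  ∫ u, ∑ j, pm x.2 j u * f (u, j) ∂(J x.1)

/-- Invariance of a measure for the semigroup `{P_T}`. -/
def isInvariantSemigroup {Y I : Type*} [MeasurableSpace Y] [MeasurableSpace I]
    (S : I → ℝ → Y → Y) (Pbar : Kernel (Y × I × ℝ) (Y × I × ℝ))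
    (μ : Measure (Y × I)) : Prop :=
  ∀ T ≥ (0:ℝ), ∀ A : Set (Y × I), MeasurableSet A →
    ∫ x, PTf S Pbar (A.indicator fun _ => (1:ℝ)) T x ∂μ = (μ A).toReal

/-- Invariance of a measure for the kernel `P`. -/
def isInvariantP {Y I : Type*} [MeasurableSpace Y] [MeasurableSpace I] [Fintype I] (S : I → ℝ → Y → Y)
    (lam : Y → ℝ) (pm : I → I → Y → ℝ) (J : Kernel Y Y) (μ : Measure (Y × I)) : Prop :=
  ∀ A : Set (Y × I), MeasurableSet A → ∫ x, Pker S lam pm J x A ∂μ = (μ A).toReal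


lemma aux_integral_exp_neg_mul {b : ℝ} (hb : 0 < b) :
    ∫ t in Ioi (0:ℝ), exp (-(b * t)) = 1 / b := by
  have h := integral_comp_mul_left_Ioi (fun x => exp (-x)) 0 hb
  simp only [mul_zero, smul_eq_mul, integral_exp_neg_Ioi, neg_zero, exp_zero, mul_one] at h
  simpa [one_div] using h

lemma aux_integrable_exp_neg_mul {b : ℝ} (hb : 0 < b) :
    IntegrableOn (fun t => exp (-(b * t))) (Ioi (0:ℝ)) := by
  simpa [neg_mul] using exp_neg_integrableOn_Ioi 0 hb

theorem P_lyapunov_condition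
    {Y : Type*} [MetricSpace Y] [TopologicalSpace.SeparableSpace Y] [CompleteSpace Y]
    [MeasurableSpace Y] [BorelSpace Y]
    {I : Type*} [Fintype I] [Nonempty I] [TopologicalSpace I] [DiscreteTopology I]
    [MeasurableSpace I] [MeasurableSingletonClass I]
    (S : I → ℝ → Y → Y)
    (hS_cont : ∀ i, ContinuousOn (fun p : ℝ × Y => S i p.1 p.2) (Ici (0:ℝ) ×ˢ (univ : Set Y)))
    (hS_zero : ∀ i y, S i 0 y = y)
    (hS_add : ∀ i, ∀ s ≥ (0:ℝ), ∀ t ≥ (0:ℝ), ∀ y, S i (s + t) y = S i s (S i t y))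
    (lam : Y → ℝ) (hlam_cont : Continuous lam) (lmin lmax : ℝ) (hlmin : 0 < lmin)
    (hlam_bd : ∀ y, lmin ≤ lam y ∧ lam y ≤ lmax)
    (pm : I → I → Y → ℝ) (hpm_cont : ∀ i j, Continuous (pm i j))
    (hpm_mem : ∀ i j y, pm i j y ∈ Icc (0:ℝ) 1) (hpm_sum : ∀ i y, ∑ j, pm i j y = 1)
    (J : Kernel Y Y) [IsMarkovKernel J]
    (ystar : Y)
    (hA48 : ∀ i, IntegrableOn (fun t => exp (-(lmin * t)) * dist (S i t ystar) ystar) (Ioi 0))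
    (L α : ℝ) (hL : 0 < L) (hα : α < lmin)
    (hA49 : ∀ u v : Y, ∀ i, ∀ t ≥ (0:ℝ), dist (S i t u) (S i t v) ≤ L * exp (α * t) * dist u v)
    (atil btil : ℝ) (hatil : 0 ≤ atil) (hbtil : 0 ≤ btil)
    (hJV : ∀ y, ∫ u, dist u ystar ∂(J y) ≤ atil * dist y ystar + btil) :
    (∀ y : Y, ∀ i : I,
      (∫ t in Ioi (0:ℝ), lam (S i t y) * exp (-(cumInt S lam y i t)) *
          ∫ u, ∑ j, pm i j u * dist u ystar ∂(J (S i t y))) ≤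
        (lmax * atil * L / (lmin - α)) * dist y ystar +
          lmax * (atil * (⨆ i' : I, ∫ t in Ioi (0:ℝ),
            exp (-(lmin * t)) * dist (S i' t ystar) ystar) + btil / lmin)) ∧
    (lmax * atil * L + α < lmin → lmax * atil * L / (lmin - α) < 1) := by
  obtain ⟨i₀⟩ := ‹Nonempty I›
  have hlmax : 0 < lmax := lt_of_lt_of_le hlmin (le_trans (hlam_bd ystar).1 (hlam_bd ystar).2)
  have hba : 0 < lmin - α := by linarith
  constructor
  · intro y i
    set V := dist y ystar with hV
    set β := ⨆ i' : I, ∫ t in Ioi (0:ℝ),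
        exp (-(lmin * t)) * dist (S i' t ystar) ystar with hβ
    -- simplify the inner sum
    have hsum : ∀ u : Y, (∑ j, pm i j u * dist u ystar) = dist u ystar := by
      intro u; rw [← Finset.sum_mul, hpm_sum, one_mul]
    simp_rw [hsum]
    -- the dominating function
    set g : ℝ → ℝ := fun t =>
      (lmax * atil * L * V) * exp (-((lmin - α) * t)) +
      ((lmax * atil) * (exp (-(lmin * t)) * dist (S i t ystar) ystar) +
        (lmax * btil) * exp (-(lmin * t))) with hg
    have hgi : IntegrableOn g (Ioi (0:ℝ)) := by
      apply ((aux_integrable_exp_neg_mul hba).const_mul _).add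
      exact ((hA48 i).const_mul _).add ((aux_integrable_exp_neg_mul hlmin).const_mul _)
    -- pointwise bound
    have hbound : ∀ t ∈ Ioi (0:ℝ),
        lam (S i t y) * exp (-(cumInt S lam y i t)) *
          (∫ u, dist u ystar ∂(J (S i t y))) ≤ g t := by
      intro t ht
      have ht0 : (0:ℝ) ≤ t := (mem_Ioi.mp ht).le
      -- cumInt lower bound
      have hScont : ContinuousOn (fun h => lam (S i h y)) (Icc 0 t) := by
        apply hlam_cont.comp_continuousOn
        have hmap : Set.MapsTo (fun h : ℝ => (h, y)) (Icc 0 t) (Ici (0:ℝ) ×ˢ (univ : Set Y)) :=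
          fun h hh => ⟨hh.1, mem_univ _⟩
        exact (hS_cont i).comp ((continuous_id.prodMk continuous_const).continuousOn) hmap
      have hcum : lmin * t ≤ cumInt S lam y i t := by
        have h1 : ∫ h in (0:ℝ)..t, lmin ≤ ∫ h in (0:ℝ)..t, lam (S i h y) := by
          apply intervalIntegral.integral_mono_on ht0 intervalIntegrable_const
          · exact (hScont.mono (by rw [uIcc_of_le ht0])).intervalIntegrable
          · intro x _; exact (hlam_bd _).1
        rw [intervalIntegral.integral_const, smul_eq_mul] at h1
        calc lmin * t = (t - 0) * lmin := by ring
          _ ≤ _ := h1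
      have hexp : exp (-(cumInt S lam y i t)) ≤ exp (-(lmin * t)) :=
        exp_le_exp.mpr (by linarith)
      have hd : dist (S i t y) ystar ≤ L * exp (α * t) * V + dist (S i t ystar) ystar := by
        calc dist (S i t y) ystar ≤ dist (S i t y) (S i t ystar) + dist (S i t ystar) ystar :=
              dist_triangle _ _ _
          _ ≤ L * exp (α * t) * V + dist (S i t ystar) ystar := by
              have := hA49 y ystar i t ht0; linarith
      have hI : (∫ u, dist u ystar ∂(J (S i t y))) ≤
          atil * (L * exp (α * t) * V + dist (S i t ystar) ystar) + btil := by
        refine (hJV _).trans ?_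
        have := mul_le_mul_of_nonneg_left hd hatil; linarith
      have hInn : (0:ℝ) ≤ ∫ u, dist u ystar ∂(J (S i t y)) :=
        integral_nonneg fun u => dist_nonneg
      have hprod : lam (S i t y) * exp (-(cumInt S lam y i t)) *
          (∫ u, dist u ystar ∂(J (S i t y))) ≤
          lmax * exp (-(lmin * t)) *
            (atil * (L * exp (α * t) * V + dist (S i t ystar) ystar) + btil) := by
        apply mul_le_mul _ hI hInn (by positivity)
        apply mul_le_mul (hlam_bd _).2 hexp (exp_pos _).le hlmax.le
      refine hprod.trans_eq ?_
      have hee : exp (-((lmin - α) * t)) = exp (α * t) * exp (-(lmin * t)) := by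
        rw [← exp_add]; ring_nf
      rw [hg]; dsimp only; rw [hee]; ring
    have hnn : ∀ t : ℝ, 0 ≤ lam (S i t y) * exp (-(cumInt S lam y i t)) *
        (∫ u, dist u ystar ∂(J (S i t y))) := by
      intro t
      have := (hlam_bd (S i t y)).1
      have : 0 ≤ lam (S i t y) := by linarith
      positivity
    have hmono : (∫ t in Ioi (0:ℝ), lam (S i t y) * exp (-(cumInt S lam y i t)) *
        (∫ u, dist u ystar ∂(J (S i t y)))) ≤ ∫ t in Ioi (0:ℝ), g t := by
      apply integral_mono_of_nonneg (Filter.Eventually.of_forall hnn) hgi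
      exact ae_restrict_of_forall_mem measurableSet_Ioi hbound
    refine hmono.trans ?_
    -- compute ∫ g
    have hint : (∫ t in Ioi (0:ℝ), g t) =
        (lmax * atil * L * V) * (1 / (lmin - α)) +
        ((lmax * atil) * (∫ t in Ioi (0:ℝ), exp (-(lmin * t)) * dist (S i t ystar) ystar) +
          (lmax * btil) * (1 / lmin)) := by
      have h0 : IntegrableOn (fun t => (lmax * atil * L * V) * exp (-((lmin - α) * t)))
          (Ioi (0:ℝ)) := (aux_integrable_exp_neg_mul hba).const_mul _
      have h1 : IntegrableOn
          (fun t => (lmax * atil) * (exp (-(lmin * t)) * dist (S i t ystar) ystar))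
          (Ioi (0:ℝ)) := (hA48 i).const_mul _
      have h2 : IntegrableOn (fun t => (lmax * btil) * exp (-(lmin * t))) (Ioi (0:ℝ)) :=
        (aux_integrable_exp_neg_mul hlmin).const_mul _
      rw [hg]
      rw [integral_add (g := fun t => (lmax * atil) * (exp (-(lmin * t)) *
          dist (S i t ystar) ystar) + (lmax * btil) * exp (-(lmin * t))) h0 (h1.add h2)]
      rw [integral_add h1 h2]
      rw [integral_const_mul, integral_const_mul, integral_const_mul,
        aux_integral_exp_neg_mul hba, aux_integral_exp_neg_mul hlmin]
    rw [hint]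
    have hDβ : (∫ t in Ioi (0:ℝ), exp (-(lmin * t)) * dist (S i t ystar) ystar) ≤ β := by
      rw [hβ]
      exact le_ciSup (f := fun i' : I => ∫ t in Ioi (0:ℝ),
        exp (-(lmin * t)) * dist (S i' t ystar) ystar)
        (Set.Finite.bddAbove (Set.finite_range _)) i
    have h2 := mul_le_mul_of_nonneg_left hDβ (by positivity : (0:ℝ) ≤ lmax * atil)
    have heq : (lmax * atil * L * V) * (1 / (lmin - α)) +
        ((lmax * atil) * β + (lmax * btil) * (1 / lmin)) =
        (lmax * atil * L / (lmin - α)) * V + lmax * (atil * β + btil / lmin) := by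
      simp only [one_div, div_eq_mul_inv]; ring
    linarith
  · intro h
    rw [div_lt_one hba]; linarith
end
end

section
/- Suppose there is a constant L_p > 0 such that ∫_Θ |p_θ(u) − p_θ(v)| ϑ(dθ) ≤ L_p ρ(u,v) for all u,v ∈ Y. Then the kernel J satisfies Assumption 4.4: for every bounded continuous g : Y × [0,∞) → ℝ, the map (y,t) ↦ ∫_Y g(u,t) J(y,du) = ∫_Θ g(w_θ(y),t) p_θ(y) ϑ(dθ) is jointly continuous on Y × [0,∞). -/
/-!
Split the integrand as `g(w_θ y, t) p_θ(y₀) + g(w_θ y, t) (p_θ(y) - p_θ(y₀))`. The first part is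
continuous in `(y, t)` by dominated convergence, with the integrable majorant `M |p_θ(y₀)|`; the
second part is at most `M ∫ |p_θ(y) - p_θ(y₀)| dϑ ≤ M L_p ρ(y, y₀)` in absolute value.
-/

open MeasureTheory ProbabilityTheory Real Set Filter Topology

noncomputable section

section

variable {Θ : Type*} [MeasurableSpace Θ] {ϑ : Measure Θ}

lemma abs_integral_mul_sub_integral_mul_le {F p q : Θ → ℝ} {M : ℝ}
    (hF : AEStronglyMeasurable F ϑ) (hFM : ∀ θ, |F θ| ≤ M)
    (hp : Integrable p ϑ) (hq : Integrable q ϑ) :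
    |∫ θ, F θ * p θ ∂ϑ - ∫ θ, F θ * q θ ∂ϑ| ≤ M * ∫ θ, |p θ - q θ| ∂ϑ := by
  have hbdd : ∀ᵐ θ ∂ϑ, ‖F θ‖ ≤ M := ae_of_all _ hFM
  have hdiff : Integrable (fun θ => F θ * (p θ - q θ)) ϑ := (hp.sub hq).bdd_mul hF hbdd
  calc |∫ θ, F θ * p θ ∂ϑ - ∫ θ, F θ * q θ ∂ϑ|
      = |∫ θ, F θ * (p θ - q θ) ∂ϑ| := by
        rw [← integral_sub (hp.bdd_mul hF hbdd) (hq.bdd_mul hF hbdd)]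
        simp only [mul_sub]
    _ ≤ ∫ θ, |F θ * (p θ - q θ)| ∂ϑ := abs_integral_le_integral_abs
    _ ≤ ∫ θ, M * |p θ - q θ| ∂ϑ := by
        refine integral_mono hdiff.abs ((hp.sub hq).abs.const_mul M) fun θ => ?_
        rw [abs_mul]
        exact mul_le_mul_of_nonneg_right (hFM θ) (abs_nonneg _)
    _ = M * ∫ θ, |p θ - q θ| ∂ϑ := integral_const_mul _ _

/-- Pairing a bounded family `F x`, continuous in `x`, against a family `P z` that is continuous
into `L¹(ϑ)` gives a jointly continuous function. -/
lemma continuousOn_integral_mul_of_tendsto_integral_abs_sub {X Z : Type*}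
    [TopologicalSpace X] [FirstCountableTopology X] [TopologicalSpace Z]
    {s : Set X} {F : X → Θ → ℝ} {P : Z → Θ → ℝ} {M : ℝ}
    (hF_meas : ∀ x ∈ s, AEStronglyMeasurable (F x) ϑ) (hF_bdd : ∀ x ∈ s, ∀ θ, |F x θ| ≤ M)
    (hF_cont : ∀ θ, ContinuousOn (fun x => F x θ) s) (hP_int : ∀ z, Integrable (P z) ϑ)
    (hP_cont : ∀ z₀, Tendsto (fun z => ∫ θ, |P z θ - P z₀ θ| ∂ϑ) (𝓝 z₀) (𝓝 0)) :
    ContinuousOn (fun q : X × Z => ∫ θ, F q.1 θ * P q.2 θ ∂ϑ) (s ×ˢ univ) := by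
  rintro ⟨x₀, z₀⟩ ⟨hx₀, -⟩
  have hfixed_weight : ContinuousWithinAt (fun q : X × Z => ∫ θ, F q.1 θ * P z₀ θ ∂ϑ)
      (s ×ˢ univ) (x₀, z₀) := by
    have hon : ContinuousOn (fun x => ∫ θ, F x θ * P z₀ θ ∂ϑ) s := by
      refine continuousOn_of_dominated (bound := fun θ => M * |P z₀ θ|)
        (fun x hx => (hF_meas x hx).mul (hP_int z₀).aestronglyMeasurable)
        (fun x hx => ae_of_all _ fun θ => ?_) ((hP_int z₀).abs.const_mul M)
        (ae_of_all _ fun θ => (hF_cont θ).mul continuousOn_const)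
      rw [Real.norm_eq_abs, abs_mul]
      exact mul_le_mul_of_nonneg_right (hF_bdd x hx θ) (abs_nonneg _)
    exact hon.comp continuousOn_fst (fun q hq => hq.1) (x₀, z₀) ⟨hx₀, mem_univ _⟩
  have hcorrection : Tendsto
      (fun q : X × Z => ∫ θ, F q.1 θ * P q.2 θ ∂ϑ - ∫ θ, F q.1 θ * P z₀ θ ∂ϑ)
      (𝓝[s ×ˢ univ] (x₀, z₀)) (𝓝 0) := by
    refine squeeze_zero_norm' (a := fun q => M * ∫ θ, |P q.2 θ - P z₀ θ| ∂ϑ) ?_ ?_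
    · filter_upwards [self_mem_nhdsWithin] with q hq
      exact abs_integral_mul_sub_integral_mul_le (hF_meas q.1 hq.1) (hF_bdd q.1 hq.1)
        (hP_int q.2) (hP_int z₀)
    · simpa using (((hP_cont z₀).comp (continuous_snd.tendsto (x₀, z₀))).const_mul M).mono_left
        nhdsWithin_le_nhds
  simpa [ContinuousWithinAt] using hcorrection.add hfixed_weight

lemma tendsto_integral_abs_sub_of_le_mul_dist {Y : Type*} [PseudoMetricSpace Y]
    {P : Y → Θ → ℝ} {L : ℝ}
    (hP : ∀ u v, ∫ θ, |P u θ - P v θ| ∂ϑ ≤ L * dist u v) (y₀ : Y) :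
    Tendsto (fun y => ∫ θ, |P y θ - P y₀ θ| ∂ϑ) (𝓝 y₀) (𝓝 0) := by
  refine squeeze_zero (fun y => integral_nonneg fun θ => abs_nonneg _) (fun y => hP y y₀) ?_
  simpa using (tendsto_iff_dist_tendsto_zero.mp (tendsto_id (x := 𝓝 y₀))).const_mul L

end

theorem IFS_satisfies_assumption44_general
    {Y : Type*} [MetricSpace Y]
    [MeasurableSpace Y] [BorelSpace Y]
    {Θ : Type*} [MeasurableSpace Θ] (ϑ : Measure Θ)
    (w : Θ → Y → Y) (hw_cont : ∀ θ, Continuous (w θ))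
    (p : Θ → Y → ℝ)
    (hw_meas : Measurable (fun q : Y × Θ => w q.2 q.1))
    (hp_int : ∀ y, Integrable (fun θ => p θ y) ϑ)
    (Lp : ℝ)
    (hA74b : ∀ u v : Y, ∫ θ, |p θ u - p θ v| ∂ϑ ≤ Lp * dist u v) :
    ∀ g : Y × ℝ → ℝ, (∃ M, ∀ q, |g q| ≤ M) →
      ContinuousOn g ((univ : Set Y) ×ˢ Ici (0:ℝ)) →
      ContinuousOn (fun q : Y × ℝ => ∫ θ, g (w θ q.1, q.2) * p θ q.1 ∂ϑ)
        ((univ : Set Y) ×ˢ Ici (0:ℝ)) := by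
  rintro g ⟨M, hM⟩ hg
  have hmaps : ∀ θ, MapsTo (fun q : Y × ℝ => (w θ q.1, q.2)) (univ ×ˢ Ici 0) (univ ×ˢ Ici 0) :=
    fun θ q hq => ⟨mem_univ _, hq.2⟩
  have hslice_meas : ∀ q ∈ (univ : Set Y) ×ˢ Ici (0:ℝ),
      AEStronglyMeasurable (fun θ => g (w θ q.1, q.2)) ϑ := by
    intro q hq
    have hslice : Continuous fun y => g (y, q.2) :=
      hg.comp_continuous (Continuous.prodMk_left q.2) fun y => ⟨mem_univ _, hq.2⟩
    exact (hslice.measurable.comp (hw_meas.comp measurable_prodMk_left)).aestronglyMeasurable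
  have hjoint := continuousOn_integral_mul_of_tendsto_integral_abs_sub
    (F := fun (q : Y × ℝ) θ => g (w θ q.1, q.2)) (P := fun y θ => p θ y) hslice_meas
    (fun _ _ θ => hM _) (fun θ => hg.comp (by fun_prop) (hmaps θ)) hp_int
    (tendsto_integral_abs_sub_of_le_mul_dist hA74b)
  exact hjoint.comp (continuousOn_id.prodMk continuous_fst.continuousOn)
    fun q hq => ⟨hq, mem_univ _⟩

theorem IFS_satisfies_assumption44
    {Y : Type*} [MetricSpace Y] [TopologicalSpace.SeparableSpace Y] [CompleteSpace Y]
    [MeasurableSpace Y] [BorelSpace Y]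
    {Θ : Type*} [TopologicalSpace Θ] [MeasurableSpace Θ] [BorelSpace Θ] (ϑ : Measure Θ)
    (w : Θ → Y → Y) (hw_cont : ∀ θ, Continuous (w θ))
    (p : Θ → Y → ℝ) (hp_cont : ∀ θ, Continuous (p θ)) (hp_nonneg : ∀ θ y, 0 ≤ p θ y)
    (hw_meas : Measurable (fun q : Y × Θ => w q.2 q.1))
    (hp_meas : Measurable (fun q : Y × Θ => p q.2 q.1))
    (hp_int : ∀ y, Integrable (fun θ => p θ y) ϑ)
    (hp_prob : ∀ y, ∫ θ, p θ y ∂ϑ = 1)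
    (Lp : ℝ) (hLp : 0 < Lp)
    (hA74b : ∀ u v : Y, ∫ θ, |p θ u - p θ v| ∂ϑ ≤ Lp * dist u v) :
    ∀ g : Y × ℝ → ℝ, (∃ M, ∀ q, |g q| ≤ M) →
      ContinuousOn g ((univ : Set Y) ×ˢ Ici (0:ℝ)) →
      ContinuousOn (fun q : Y × ℝ => ∫ θ, g (w θ q.1, q.2) * p θ q.1 ∂ϑ)
        ((univ : Set Y) ×ˢ Ici (0:ℝ)) :=
  IFS_satisfies_assumption44_general ϑ w hw_cont p hw_meas hp_int Lp hA74b
end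
end
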